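/- arXiv:0807.0614 — 4 statements merged into one kernel-verified Lean document; each statement's English description precedes it below -/
import Mathlib

section
/- Let D be an N-linear connection on E with curvature ℝ(X,Y)Z = D_X D_Y Z − D_Y D_X Z − D_{[X,Y]} Z. Then ℝ(δ/δt^c, δ/δt^b) δ/δt^a = R^d_{abc} δ/δt^d, where R^d_{abc} = δA^d_{ab}/δt^c − δA^d_{ac}/δt^b + A^f_{ab} A^d_{fc} − A^f_{ac} A^d_{fb} + C^{d(r)}_{a(f)} R^{(f)}_{(r)bc}; in particular the δ/δx- and ∂/∂p-components of ℝ(δ/δt^c, δ/δt^b) δ/δt^a vanish. -/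
noncomputable section

open scoped BigOperators

/-- The local model of the dual 1-jet bundle: `(t, x, p)` with `p : Fin m → Fin n → ℝ`,
`p a i = p_i^a`.  The tangent space at any point is identified with the same product. -/
abbrev E (m n : ℕ) : Type := (Fin m → ℝ) × (Fin n → ℝ) × (Fin m → Fin n → ℝ)

/-- The natural frame vector `∂/∂t^a`. -/
def dTnat (m n : ℕ) (a : Fin m) : E m n := (Pi.single a 1, 0, 0)

/-- The natural frame vector `∂/∂x^i`. -/
def dXnat (m n : ℕ) (i : Fin n) : E m n := (0, Pi.single i 1, 0)

/-- The natural (vertical) frame vector `∂/∂p_i^a`. -/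
def dPnat (m n : ℕ) (a : Fin m) (i : Fin n) : E m n := (0, 0, Pi.single a (Pi.single i 1))

/-- A nonlinear connection: coefficient families `N1 a i b = N1^{(a)}_{(i)b}` and
`N2 a i j = N2^{(a)}_{(i)j}`. -/
structure NLC (m n : ℕ) where
  N1 : Fin m → Fin n → Fin m → E m n → ℝ
  N2 : Fin m → Fin n → Fin n → E m n → ℝ

variable {m n : ℕ}

/-- Adapted frame vector field `δ/δt^b`. -/
def NLC.dT (N : NLC m n) (b : Fin m) : E m n → E m n :=
  fun u => (Pi.single b 1, 0, fun a i => -(N.N1 a i b u))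

/-- Adapted frame vector field `δ/δx^j`. -/
def NLC.dX (N : NLC m n) (j : Fin n) : E m n → E m n :=
  fun u => (0, Pi.single j 1, fun a i => -(N.N2 a i j u))

/-- The constant vertical frame vector field `∂/∂p_k^c`. -/
def dPfield (m n : ℕ) (c : Fin m) (k : Fin n) : E m n → E m n := fun _ => dPnat m n c k

/-- Lie bracket of vector fields on the model. -/
def lie (X Y : E m n → E m n) : E m n → E m n :=
  fun u => fderiv ℝ Y u (X u) - fderiv ℝ X u (Y u)

/-- The `δ/δt^c`-derivative of a function. -/
def NLC.delT (N : NLC m n) (c : Fin m) (f : E m n → ℝ) (u : E m n) : ℝ :=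
  fderiv ℝ f u (N.dT c u)

/-- The `δ/δx^k`-derivative of a function. -/
def NLC.delX (N : NLC m n) (k : Fin n) (f : E m n → ℝ) (u : E m n) : ℝ :=
  fderiv ℝ f u (N.dX k u)

/-- The `∂/∂p_k^c`-derivative of a function. -/
def delP (c : Fin m) (k : Fin n) (f : E m n → ℝ) (u : E m n) : ℝ :=
  fderiv ℝ f u (dPnat m n c k)

/-- `R^{(a)}_{(i)bc}`. -/
def NLC.R1 (N : NLC m n) (a : Fin m) (i : Fin n) (b c : Fin m) (u : E m n) : ℝ :=
  N.delT c (N.N1 a i b) u - N.delT b (N.N1 a i c) u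

/-- `R^{(a)}_{(i)bk}`. -/
def NLC.Rmix (N : NLC m n) (a : Fin m) (i : Fin n) (b : Fin m) (k : Fin n) (u : E m n) : ℝ :=
  N.delX k (N.N1 a i b) u - N.delT b (N.N2 a i k) u

/-- `R^{(a)}_{(i)jk}`. -/
def NLC.R2 (N : NLC m n) (a : Fin m) (i j k : Fin n) (u : E m n) : ℝ :=
  N.delX k (N.N2 a i j) u - N.delX j (N.N2 a i k) u

/-- `B^{(a)(k)}_{(i)b(c)} = ∂N1^{(a)}_{(i)b}/∂p_k^c`. -/
def NLC.B1 (N : NLC m n) (a : Fin m) (i : Fin n) (b c : Fin m) (k : Fin n) (u : E m n) : ℝ :=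
  delP c k (N.N1 a i b) u

/-- `B^{(a)(k)}_{(i)j(c)} = ∂N2^{(a)}_{(i)j}/∂p_k^c`. -/
def NLC.B2 (N : NLC m n) (a : Fin m) (i j : Fin n) (c : Fin m) (k : Fin n) (u : E m n) : ℝ :=
  delP c k (N.N2 a i j) u

/-- Smoothness of the coefficients of a nonlinear connection on a set. -/
def NLC.SmoothOn (N : NLC m n) (O : Set (E m n)) : Prop :=
  (∀ a i b, ContDiffOn ℝ (⊤ : ℕ∞) (N.N1 a i b) O) ∧ (∀ a i j, ContDiffOn ℝ (⊤ : ℕ∞) (N.N2 a i j) O)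

/-- The open set `U × V × P` of the model. -/
def modelSet (U : Set (Fin m → ℝ)) (V : Set (Fin n → ℝ)) : Set (E m n) :=
  U ×ˢ (V ×ˢ (Set.univ : Set (Fin m → Fin n → ℝ)))

/-- Jacobian matrix entry `(Jac f t) b a = ∂f^b/∂t^a`. -/
def Jac {k : ℕ} (f : (Fin k → ℝ) → (Fin k → ℝ)) (t : Fin k → ℝ) (b a : Fin k) : ℝ :=
  fderiv ℝ f t (Pi.single a 1) b

/-- A jet coordinate change: smooth diffeomorphisms `φ : U → U'` and `ψ : V → V'`. -/
structure JetChange (m n : ℕ) where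
  U : Set (Fin m → ℝ)
  U' : Set (Fin m → ℝ)
  V : Set (Fin n → ℝ)
  V' : Set (Fin n → ℝ)
  hUopen : IsOpen U
  hU'open : IsOpen U'
  hVopen : IsOpen V
  hV'open : IsOpen V'
  φ : (Fin m → ℝ) → (Fin m → ℝ)
  φi : (Fin m → ℝ) → (Fin m → ℝ)
  ψ : (Fin n → ℝ) → (Fin n → ℝ)
  ψi : (Fin n → ℝ) → (Fin n → ℝ)
  hφ : ContDiffOn ℝ (⊤ : ℕ∞) φ U
  hφi : ContDiffOn ℝ (⊤ : ℕ∞) φi U'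
  hψ : ContDiffOn ℝ (⊤ : ℕ∞) ψ V
  hψi : ContDiffOn ℝ (⊤ : ℕ∞) ψi V'
  hφmaps : Set.MapsTo φ U U'
  hφimaps : Set.MapsTo φi U' U
  hψmaps : Set.MapsTo ψ V V'
  hψimaps : Set.MapsTo ψi V' V
  hφleft : ∀ t ∈ U, φi (φ t) = t
  hφright : ∀ s ∈ U', φ (φi s) = s
  hψleft : ∀ x ∈ V, ψi (ψ x) = x
  hψright : ∀ y ∈ V', ψ (ψi y) = y

/-- The source domain `U × V × P` of a jet change. -/
def JetChange.src (C : JetChange m n) : Set (E m n) := modelSet C.U C.V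

/-- The induced map `Φ` on the dual 1-jet space:
`p̃_j^b = (∂t̃^b/∂t^c)(∂x^k/∂x̃^j) p_k^c`. -/
def JetChange.Φ (C : JetChange m n) : E m n → E m n :=
  fun u => (C.φ u.1, C.ψ u.2.1,
    fun b j => ∑ c, ∑ k, Jac C.φ u.1 b c * Jac C.ψi (C.ψ u.2.1) k j * u.2.2 c k)

/-- The transformation rule (7) for nonlinear connections under a jet change. -/
def JetChange.Rule7 (C : JetChange m n) (N N' : NLC m n) : Prop :=
  ∀ u ∈ C.src,
    (∀ b j a,
      ∑ c, N'.N1 b j c (C.Φ u) * Jac C.φ u.1 c a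
        = (∑ c, ∑ k, N.N1 c k a u * Jac C.φ u.1 b c * Jac C.ψi (C.ψ u.2.1) k j)
          - fderiv ℝ (fun v => (C.Φ v).2.2 b j) u (dTnat m n a))
    ∧ (∀ b j i,
      ∑ k, N'.N2 b j k (C.Φ u) * Jac C.ψ u.2.1 k i
        = (∑ c, ∑ k, N.N2 c k i u * Jac C.φ u.1 b c * Jac C.ψi (C.ψ u.2.1) k j)
          - fderiv ℝ (fun v => (C.Φ v).2.2 b j) u (dXnat m n i))

/-- The adapted 1-form `δp_i^a` evaluated at `u` on a tangent vector `ξ`. -/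
def delPform (N : NLC m n) (a : Fin m) (i : Fin n) (u : E m n) (ξ : E m n) : ℝ :=
  ξ.2.2 a i + (∑ b, N.N1 a i b u * ξ.1 b) + (∑ j, N.N2 a i j u * ξ.2.1 j)

/-- The `T`-horizontal subspace at `u`. -/
def NLC.HT (N : NLC m n) (u : E m n) : Submodule ℝ (E m n) :=
  Submodule.span ℝ (Set.range fun a => N.dT a u)

/-- The `M`-horizontal subspace at `u`. -/
def NLC.HM (N : NLC m n) (u : E m n) : Submodule ℝ (E m n) :=
  Submodule.span ℝ (Set.range fun i => N.dX i u)

/-- The vertical subspace. -/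
def Vert (m n : ℕ) : Submodule ℝ (E m n) :=
  Submodule.span ℝ (Set.range fun ai : Fin m × Fin n => dPnat m n ai.1 ai.2)

/-- The horizontal subspace at `u`. -/
def NLC.Hor (N : NLC m n) (u : E m n) : Submodule ℝ (E m n) :=
  Submodule.span ℝ ((Set.range fun a => N.dT a u) ∪ (Set.range fun i => N.dX i u))

/-- Pointwise `T`-horizontal projection. -/
def NLC.hT (N : NLC m n) (u : E m n) (ξ : E m n) : E m n :=
  (ξ.1, 0, fun a i => -∑ b, N.N1 a i b u * ξ.1 b)

/-- Pointwise `M`-horizontal projection. -/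
def NLC.hM (N : NLC m n) (u : E m n) (ξ : E m n) : E m n :=
  (0, ξ.2.1, fun a i => -∑ j, N.N2 a i j u * ξ.2.1 j)

/-- Pointwise vertical projection. -/
def NLC.w (N : NLC m n) (u : E m n) (ξ : E m n) : E m n :=
  (0, 0, fun a i => ξ.2.2 a i + (∑ b, N.N1 a i b u * ξ.1 b) + (∑ j, N.N2 a i j u * ξ.2.1 j))

/-- The almost product structure `ℙ = h_T + h_M − w` of a nonlinear connection, pointwise. -/
def NLC.apP (N : NLC m n) (u : E m n) (ξ : E m n) : E m n :=
  (ξ.1, ξ.2.1, fun a i =>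
    -(ξ.2.2 a i) - 2 * (∑ b, N.N1 a i b u * ξ.1 b) - 2 * (∑ j, N.N2 a i j u * ξ.2.1 j))

/-- `h_T` applied to a vector field. -/
def NLC.hTF (N : NLC m n) (X : E m n → E m n) : E m n → E m n := fun u => N.hT u (X u)

/-- `h_M` applied to a vector field. -/
def NLC.hMF (N : NLC m n) (X : E m n → E m n) : E m n → E m n := fun u => N.hM u (X u)

/-- `w` applied to a vector field. -/
def NLC.wF (N : NLC m n) (X : E m n → E m n) : E m n → E m n := fun u => N.w u (X u)

/-- `ℙ` applied to a vector field. -/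
def NLC.PF (N : NLC m n) (X : E m n → E m n) : E m n → E m n := fun u => N.apP u (X u)

/-- The Nijenhuis tensor of the almost product structure `ℙ`. -/
def Nij (N : NLC m n) (X Y : E m n → E m n) : E m n → E m n :=
  fun u => N.PF (N.PF (lie X Y)) u + lie (N.PF X) (N.PF Y) u
    - N.PF (lie (N.PF X) Y) u - N.PF (lie X (N.PF Y)) u

/-- An `N`-linear connection: the nine adapted coefficient families.
Index conventions: `A1 a b c = A^a_{bc}`, `A2 i j c = A^i_{jc}`,
`A3 a i b j c = A^{(a)(j)}_{(i)(b)c}`, `H1 a b k = H^a_{bk}`, `H2 i j k = H^i_{jk}`,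
`H3 a i b j k = H^{(a)(j)}_{(i)(b)k}`, `C1 a b c k = C^{a(k)}_{b(c)}`,
`C2 i j c k = C^{i(k)}_{j(c)}`, `C3 a i b j c k = C^{(a)(j)(k)}_{(i)(b)(c)}`. -/
structure NLinConn (m n : ℕ) where
  A1 : Fin m → Fin m → Fin m → E m n → ℝ
  A2 : Fin n → Fin n → Fin m → E m n → ℝ
  A3 : Fin m → Fin n → Fin m → Fin n → Fin m → E m n → ℝ
  H1 : Fin m → Fin m → Fin n → E m n → ℝ
  H2 : Fin n → Fin n → Fin n → E m n → ℝ
  H3 : Fin m → Fin n → Fin m → Fin n → Fin n → E m n → ℝ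
  C1 : Fin m → Fin m → Fin m → Fin n → E m n → ℝ
  C2 : Fin n → Fin n → Fin m → Fin n → E m n → ℝ
  C3 : Fin m → Fin n → Fin m → Fin n → Fin m → Fin n → E m n → ℝ

/-- Smoothness of the coefficients of an `N`-linear connection on a set. -/
def NLinConn.SmoothOn (D : NLinConn m n) (O : Set (E m n)) : Prop :=
  (∀ a b c, ContDiffOn ℝ (⊤ : ℕ∞) (D.A1 a b c) O) ∧ (∀ i j c, ContDiffOn ℝ (⊤ : ℕ∞) (D.A2 i j c) O) ∧
  (∀ a i b j c, ContDiffOn ℝ (⊤ : ℕ∞) (D.A3 a i b j c) O) ∧ (∀ a b k, ContDiffOn ℝ (⊤ : ℕ∞) (D.H1 a b k) O) ∧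
  (∀ i j k, ContDiffOn ℝ (⊤ : ℕ∞) (D.H2 i j k) O) ∧ (∀ a i b j k, ContDiffOn ℝ (⊤ : ℕ∞) (D.H3 a i b j k) O) ∧
  (∀ a b c k, ContDiffOn ℝ (⊤ : ℕ∞) (D.C1 a b c k) O) ∧ (∀ i j c k, ContDiffOn ℝ (⊤ : ℕ∞) (D.C2 i j c k) O) ∧
  (∀ a i b j c k, ContDiffOn ℝ (⊤ : ℕ∞) (D.C3 a i b j c k) O)

/-- Adapted `t`-component of a vector field. -/
def compT (X : E m n → E m n) (a : Fin m) (u : E m n) : ℝ := (X u).1 a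

/-- Adapted `x`-component of a vector field. -/
def compX (X : E m n → E m n) (i : Fin n) (u : E m n) : ℝ := (X u).2.1 i

/-- Adapted vertical component of a vector field. -/
def compP (N : NLC m n) (X : E m n → E m n) (a : Fin m) (i : Fin n) (u : E m n) : ℝ :=
  (X u).2.2 a i + (∑ b, N.N1 a i b u * (X u).1 b) + (∑ j, N.N2 a i j u * (X u).2.1 j)

/-- Reconstruct a tangent vector from its adapted components. -/
def fromA (N : NLC m n) (ft : Fin m → ℝ) (fx : Fin n → ℝ) (fp : Fin m → Fin n → ℝ)
    (u : E m n) : E m n :=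
  (ft, fx, fun a i => fp a i - (∑ b, N.N1 a i b u * ft b) - (∑ j, N.N2 a i j u * fx j))

/-- Covariant derivative `D_{δ/δt^c} Y`. -/
def covT (N : NLC m n) (D : NLinConn m n) (c : Fin m) (Y : E m n → E m n) : E m n → E m n :=
  fun u => fromA N
    (fun a => N.delT c (compT Y a) u + ∑ b, compT Y b u * D.A1 a b c u)
    (fun i => N.delT c (compX Y i) u + ∑ j, compX Y j u * D.A2 i j c u)
    (fun a i => N.delT c (compP N Y a i) u - ∑ b, ∑ j, compP N Y b j u * D.A3 a i b j c u)
    u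

/-- Covariant derivative `D_{δ/δx^k} Y`. -/
def covX (N : NLC m n) (D : NLinConn m n) (k : Fin n) (Y : E m n → E m n) : E m n → E m n :=
  fun u => fromA N
    (fun a => N.delX k (compT Y a) u + ∑ b, compT Y b u * D.H1 a b k u)
    (fun i => N.delX k (compX Y i) u + ∑ j, compX Y j u * D.H2 i j k u)
    (fun a i => N.delX k (compP N Y a i) u - ∑ b, ∑ j, compP N Y b j u * D.H3 a i b j k u)
    u

/-- Covariant derivative `D_{∂/∂p_k^c} Y`. -/
def covP (N : NLC m n) (D : NLinConn m n) (c : Fin m) (k : Fin n) (Y : E m n → E m n) :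
    E m n → E m n :=
  fun u => fromA N
    (fun a => delP c k (compT Y a) u + ∑ b, compT Y b u * D.C1 a b c k u)
    (fun i => delP c k (compX Y i) u + ∑ j, compX Y j u * D.C2 i j c k u)
    (fun a i => delP c k (compP N Y a i) u - ∑ b, ∑ j, compP N Y b j u * D.C3 a i b j c k u)
    u

/-- Covariant derivative `D_X Y` of an `N`-linear connection. -/
def covD (N : NLC m n) (D : NLinConn m n) (X Y : E m n → E m n) : E m n → E m n :=
  fun u => (∑ c, compT X c u • covT N D c Y u) + (∑ k, compX X k u • covX N D k Y u)
    + ∑ c, ∑ k, compP N X c k u • covP N D c k Y u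

/-- Torsion of an `N`-linear connection. -/
def tors (N : NLC m n) (D : NLinConn m n) (X Y : E m n → E m n) : E m n → E m n :=
  fun u => covD N D X Y u - covD N D Y X u - lie X Y u

/-- Curvature of an `N`-linear connection. -/
def curvR (N : NLC m n) (D : NLinConn m n) (X Y Z : E m n → E m n) : E m n → E m n :=
  fun u => covD N D X (covD N D Y Z) u - covD N D Y (covD N D X Z) u
    - covD N D (lie X Y) Z u

/-- The Berwald nonlinear connection associated to linear connections `χ`, `Γ`. -/
def berN (χ : Fin m → Fin m → Fin m → (Fin m → ℝ) → ℝ)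
    (Γ : Fin n → Fin n → Fin n → (Fin n → ℝ) → ℝ) : NLC m n where
  N1 := fun a i b u => ∑ c, χ a c b u.1 * u.2.2 c i
  N2 := fun a i j u => -∑ k, Γ k i j u.2.1 * u.2.2 a k

/-- The Berwald `N`-linear connection associated to linear connections `χ`, `Γ`. -/
def berD (χ : Fin m → Fin m → Fin m → (Fin m → ℝ) → ℝ)
    (Γ : Fin n → Fin n → Fin n → (Fin n → ℝ) → ℝ) : NLinConn m n where
  A1 := fun a b c u => χ a b c u.1
  A2 := fun _ _ _ _ => 0
  A3 := fun a i b j c u => -((if j = i then (1 : ℝ) else 0) * χ a b c u.1)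
  H1 := fun _ _ _ _ => 0
  H2 := fun i j k u => Γ i j k u.2.1
  H3 := fun a i b j k u => (if a = b then (1 : ℝ) else 0) * Γ j i k u.2.1
  C1 := fun _ _ _ _ _ => 0
  C2 := fun _ _ _ _ _ => 0
  C3 := fun _ _ _ _ _ _ _ => 0

/-- Curvature tensor `κ^f_{gab}` of a linear connection `χ` on `U`. -/
def kapC (χ : Fin m → Fin m → Fin m → (Fin m → ℝ) → ℝ) (f g a b : Fin m)
    (t : Fin m → ℝ) : ℝ :=
  fderiv ℝ (χ f g a) t (Pi.single b 1) - fderiv ℝ (χ f g b) t (Pi.single a 1)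
    + (∑ e, χ e g a t * χ f e b t) - ∑ e, χ e g b t * χ f e a t

/-- Curvature tensor `𝐫^s_{rij}` of a linear connection `Γ` on `V`. -/
def rC (Γ : Fin n → Fin n → Fin n → (Fin n → ℝ) → ℝ) (s r i j : Fin n)
    (x : Fin n → ℝ) : ℝ :=
  fderiv ℝ (Γ s r i) x (Pi.single j 1) - fderiv ℝ (Γ s r j) x (Pi.single i 1)
    + (∑ l, Γ l r i x * Γ s l j x) - ∑ l, Γ l r j x * Γ s l i x

end

section Aux13
open scoped BigOperators
variable {m n : ℕ}

lemma single_mul_sum' {k : ℕ} (a : Fin k) (g : Fin k → ℝ) :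
    ∑ e, (Pi.single a 1 : Fin k → ℝ) e * g e = g a := by
  simp [Pi.single_apply, ite_mul, Finset.sum_ite_eq]

lemma mul_single_sum' {k : ℕ} (a : Fin k) (g : Fin k → ℝ) :
    ∑ e, g e * (Pi.single a 1 : Fin k → ℝ) e = g a := by
  simp [Pi.single_apply, mul_ite, Finset.sum_ite_eq']

lemma compT_dT' (N : NLC m n) (a d : Fin m) :
    compT (N.dT a) d = fun _ => (Pi.single a 1 : Fin m → ℝ) d := rfl

lemma compX_dT' (N : NLC m n) (a : Fin m) (i : Fin n) :
    compX (N.dT a) i = fun _ => (0:ℝ) := rfl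

lemma compP_dT' (N : NLC m n) (a f : Fin m) (r : Fin n) :
    compP N (N.dT a) f r = fun _ => (0:ℝ) := by
  funext u
  simp [compP, NLC.dT, Pi.single_apply, mul_ite, Finset.sum_ite_eq']

lemma covT_dT' (N : NLC m n) (D : NLinConn m n) (a b : Fin m) :
    covT N D b (N.dT a) = fun u => fromA N (fun d => D.A1 d a b u) 0 0 u := by
  funext u
  simp only [covT, compT_dT', compX_dT', compP_dT']
  simp [NLC.delT, single_mul_sum']
  rfl

lemma covP_dT' (N : NLC m n) (D : NLinConn m n) (a f : Fin m) (r : Fin n) :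
    covP N D f r (N.dT a) = fun u => fromA N (fun d => D.C1 d a f r u) 0 0 u := by
  funext u
  simp only [covP, compT_dT', compX_dT', compP_dT']
  simp [delP, single_mul_sum']
  rfl

end Aux13

section Aux13b
open scoped BigOperators
variable {m n : ℕ}

lemma compT_covT_dT' (N : NLC m n) (D : NLinConn m n) (a b d : Fin m) :
    compT (covT N D b (N.dT a)) d = D.A1 d a b := by
  funext u; rw [covT_dT']; simp [compT, fromA]

lemma compX_covT_dT' (N : NLC m n) (D : NLinConn m n) (a b : Fin m) (i : Fin n) :
    compX (covT N D b (N.dT a)) i = fun _ => (0:ℝ) := by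
  funext u; rw [covT_dT']; simp [compX, fromA]

lemma compP_covT_dT' (N : NLC m n) (D : NLinConn m n) (a b f : Fin m) (r : Fin n) :
    compP N (covT N D b (N.dT a)) f r = fun _ => (0:ℝ) := by
  funext u; rw [covT_dT']; simp [compP, fromA]

lemma covT_covT_dT' (N : NLC m n) (D : NLinConn m n) (a b c : Fin m) (u : E m n) :
    covT N D c (covT N D b (N.dT a)) u
      = fromA N (fun d => N.delT c (D.A1 d a b) u + ∑ e, D.A1 e a b u * D.A1 d e c u) 0 0 u := by
  simp only [covT, compT_covT_dT', compX_covT_dT', compP_covT_dT']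
  simp [NLC.delT]
  rfl

lemma covD_dT' (N : NLC m n) (D : NLinConn m n) (e : Fin m) (Y : E m n → E m n) (u : E m n) :
    covD N D (N.dT e) Y u = covT N D e Y u := by
  simp only [covD, compT_dT', compX_dT', compP_dT']
  simp [Pi.single_apply, ite_smul, Finset.sum_ite_eq]

lemma fromA_eq_sum' (N : NLC m n) (ft : Fin m → ℝ) (u : E m n) :
    fromA N ft 0 0 u = ∑ d, ft d • N.dT d u := by
  unfold fromA NLC.dT
  refine Prod.ext ?_ (Prod.ext ?_ ?_)
  · simp only [Prod.fst_sum, Prod.smul_fst]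
    funext e
    simp [Finset.sum_apply, Pi.single_apply, mul_ite, Finset.sum_ite_eq']
  · simp only [Prod.snd_sum, Prod.smul_snd, Prod.fst_sum, Prod.smul_fst]
    simp
  · simp only [Prod.snd_sum, Prod.smul_snd]
    funext f r
    simp only [Finset.sum_apply, Pi.smul_apply, smul_eq_mul]
    simp [mul_neg, Finset.sum_sub_distrib, Finset.sum_neg_distrib, mul_comm]

end Aux13b

section Aux13c
open scoped BigOperators
variable {m n : ℕ}

lemma fderiv_dT' (N : NLC m n) {O : Set (E m n)} (hO : IsOpen O)
    (h1 : ∀ a i b, ContDiffOn ℝ (⊤ : ℕ∞) (N.N1 a i b) O)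
    {u : E m n} (hu : u ∈ O) (e : Fin m) :
    fderiv ℝ (N.dT e) u =
      (0 : (E m n) →L[ℝ] (Fin m → ℝ)).prod ((0 : (E m n) →L[ℝ] (Fin n → ℝ)).prod
        (ContinuousLinearMap.pi fun f => ContinuousLinearMap.pi fun r =>
          -(fderiv ℝ (N.N1 f r e) u))) := by
  refine HasFDerivAt.fderiv ?_
  refine HasFDerivAt.prodMk (hasFDerivAt_const _ _) (HasFDerivAt.prodMk (hasFDerivAt_const _ _) ?_)
  refine hasFDerivAt_pi.2 fun f => hasFDerivAt_pi.2 fun r => ?_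
  exact (((h1 f r e).contDiffAt (hO.mem_nhds hu)).differentiableAt (by simp)).hasFDerivAt.neg

lemma lie_dT' (N : NLC m n) {O : Set (E m n)} (hO : IsOpen O)
    (h1 : ∀ a i b, ContDiffOn ℝ (⊤ : ℕ∞) (N.N1 a i b) O)
    {u : E m n} (hu : u ∈ O) (b c : Fin m) :
    lie (N.dT c) (N.dT b) u = (0, 0, fun f r => -(N.R1 f r b c u)) := by
  simp only [lie, fderiv_dT' N hO h1 hu]
  refine Prod.ext ?_ (Prod.ext ?_ ?_)
  · simp
  · simp
  · funext f r
    simp [NLC.R1, NLC.delT]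
    ring

end Aux13c

section Aux13d
open scoped BigOperators
variable {m n : ℕ}

lemma covD_lie' (N : NLC m n) (D : NLinConn m n) {O : Set (E m n)} (hO : IsOpen O)
    (h1 : ∀ a i b, ContDiffOn ℝ (⊤ : ℕ∞) (N.N1 a i b) O)
    {u : E m n} (hu : u ∈ O) (a b c : Fin m) :
    covD N D (lie (N.dT c) (N.dT b)) (N.dT a) u
      = ∑ f, ∑ r, (-(N.R1 f r b c u)) • covP N D f r (N.dT a) u := by
  have hW := lie_dT' N hO h1 hu b c
  simp only [covD, compT, compX, compP, hW]
  simp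

lemma triple_swap' (t : Fin m → Fin n → Fin m → E m n) :
    ∑ f, ∑ r, ∑ d, t f r d = ∑ d, ∑ f, ∑ r, t f r d :=
  calc ∑ f, ∑ r, ∑ d, t f r d
      = ∑ f, ∑ d, ∑ r, t f r d := Finset.sum_congr rfl fun _ _ => Finset.sum_comm
    _ = ∑ d, ∑ f, ∑ r, t f r d := Finset.sum_comm

end Aux13d

section Statements

open scoped BigOperators

theorem stmt13 (m n : ℕ) (U : Set (Fin m → ℝ)) (V : Set (Fin n → ℝ))
    (hU : IsOpen U) (hV : IsOpen V) (N : NLC m n) (hN : N.SmoothOn (modelSet U V))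
    (D : NLinConn m n) (hD : D.SmoothOn (modelSet U V)) :
    ∀ u ∈ modelSet U V, ∀ a b c : Fin m,
      curvR N D (N.dT c) (N.dT b) (N.dT a) u
        = ∑ d, (N.delT c (D.A1 d a b) u - N.delT b (D.A1 d a c) u
            + (∑ f, D.A1 f a b u * D.A1 d f c u) - (∑ f, D.A1 f a c u * D.A1 d f b u)
            + ∑ f, ∑ r, D.C1 d a f r u * N.R1 f r b c u) • N.dT d u := by
  intro u hu a b c
  have hO : IsOpen (modelSet U V) := hU.prod (hV.prod isOpen_univ)
  unfold curvR
  rw [show covD N D (N.dT b) (N.dT a) = covT N D b (N.dT a) from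
        funext (covD_dT' N D b (N.dT a)),
      show covD N D (N.dT c) (N.dT a) = covT N D c (N.dT a) from
        funext (covD_dT' N D c (N.dT a)),
      covD_dT' N D c _ u, covD_dT' N D b _ u,
      covT_covT_dT' N D a b c u, covT_covT_dT' N D a c b u,
      covD_lie' N D hO hN.1 hu a b c]
  simp only [covP_dT', fromA_eq_sum', Finset.smul_sum, smul_smul]
  rw [triple_swap']
  rw [← Finset.sum_sub_distrib, ← Finset.sum_sub_distrib]
  refine Finset.sum_congr rfl fun d _ => ?_
  rw [← sub_smul]
  simp only [← Finset.sum_smul]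
  rw [← sub_smul]
  congr 1
  simp only [neg_mul, Finset.sum_neg_distrib]
  have hcomm : ∑ f, ∑ r, N.R1 f r b c u * D.C1 d a f r u
      = ∑ f, ∑ r, D.C1 d a f r u * N.R1 f r b c u :=
    Finset.sum_congr rfl fun f _ => Finset.sum_congr rfl fun r _ => mul_comm _ _
  rw [hcomm]
  ring


end Statements
end

section
/- Let D be an N-linear connection on E with curvature ℝ(X,Y)Z = D_X D_Y Z − D_Y D_X Z − D_{[X,Y]} Z. Then ℝ(δ/δx^k, δ/δx^j) δ/δx^i = R^l_{ijk} δ/δx^l, where R^l_{ijk} = δH^l_{ij}/δx^k − δH^l_{ik}/δx^j + H^r_{ij} H^l_{rk} − H^r_{ik} H^l_{rj} + C^{l(r)}_{i(f)} R^{(f)}_{(r)jk}; in particular the δ/δt- and ∂/∂p-components of ℝ(δ/δx^k, δ/δx^j) δ/δx^i vanish. -/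
section Aux14

open scoped BigOperators

variable {m n : ℕ}

lemma delX_const' (N : NLC m n) (k : Fin n) (c : ℝ) (u : E m n) :
    N.delX k (fun _ => c) u = 0 := by
  simp [NLC.delX]

lemma delP_const' (c : Fin m) (k : Fin n) (r : ℝ) (u : E m n) :
    delP c k (fun _ => r) u = 0 := by
  simp [delP]

lemma dX_eq_fromA (N : NLC m n) (i : Fin n) :
    N.dX i = fun v => fromA N 0 (fun l => (Pi.single i 1 : Fin n → ℝ) l) 0 v := by
  funext v
  refine Prod.ext rfl (Prod.ext rfl ?_)
  funext a r
  simp [NLC.dX, fromA, Pi.single_apply, mul_ite, Finset.sum_ite_eq']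

lemma compT_fromA0 (N : NLC m n) (fx : Fin n → E m n → ℝ) (a : Fin m) :
    compT (fun v => fromA N 0 (fun l => fx l v) 0 v) a = fun _ => 0 := rfl

lemma compX_fromA0 (N : NLC m n) (fx : Fin n → E m n → ℝ) (l : Fin n) :
    compX (fun v => fromA N 0 (fun l => fx l v) 0 v) l = fx l := rfl

lemma compP_fromA0 (N : NLC m n) (fx : Fin n → E m n → ℝ) (a : Fin m) (r : Fin n) :
    compP N (fun v => fromA N 0 (fun l => fx l v) 0 v) a r = fun _ => 0 := by
  funext v
  simp [compP, fromA]

lemma covX_fromA0 (N : NLC m n) (D : NLinConn m n) (k : Fin n) (fx : Fin n → E m n → ℝ)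
    (u : E m n) :
    covX N D k (fun v => fromA N 0 (fun l => fx l v) 0 v) u
      = fromA N 0 (fun l => N.delX k (fx l) u + ∑ r, fx r u * D.H2 l r k u) 0 u := by
  unfold covX
  rw [show (fun a => N.delX k (compT (fun v => fromA N 0 (fun l => fx l v) 0 v) a) u
        + ∑ b, compT (fun v => fromA N 0 (fun l => fx l v) 0 v) b u * D.H1 a b k u)
      = (0 : Fin m → ℝ) by
    funext a
    rw [compT_fromA0, delX_const']
    simp [compT_fromA0]]
  rw [show (fun a r => N.delX k (compP N (fun v => fromA N 0 (fun l => fx l v) 0 v) a r) u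
        - ∑ b, ∑ jj, compP N (fun v => fromA N 0 (fun l => fx l v) 0 v) b jj u
            * D.H3 a r b jj k u)
      = (0 : Fin m → Fin n → ℝ) by
    funext a r
    rw [compP_fromA0, delX_const']
    simp [compP_fromA0]]
  rfl

lemma covP_fromA0 (N : NLC m n) (D : NLinConn m n) (c : Fin m) (k : Fin n)
    (fx : Fin n → E m n → ℝ) (u : E m n) :
    covP N D c k (fun v => fromA N 0 (fun l => fx l v) 0 v) u
      = fromA N 0 (fun l => delP c k (fx l) u + ∑ r, fx r u * D.C2 l r c k u) 0 u := by
  unfold covP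
  rw [show (fun a => delP c k (compT (fun v => fromA N 0 (fun l => fx l v) 0 v) a) u
        + ∑ b, compT (fun v => fromA N 0 (fun l => fx l v) 0 v) b u * D.C1 a b c k u)
      = (0 : Fin m → ℝ) by
    funext a
    rw [compT_fromA0, delP_const']
    simp [compT_fromA0]]
  rw [show (fun a r => delP c k (compP N (fun v => fromA N 0 (fun l => fx l v) 0 v) a r) u
        - ∑ b, ∑ jj, compP N (fun v => fromA N 0 (fun l => fx l v) 0 v) b jj u
            * D.C3 a r b jj c k u)
      = (0 : Fin m → Fin n → ℝ) by
    funext a r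
    rw [compP_fromA0, delP_const']
    simp [compP_fromA0]]
  rfl

lemma covD_dX' (N : NLC m n) (D : NLinConn m n) (j : Fin n) (Z : E m n → E m n) (u : E m n) :
    covD N D (N.dX j) Z u = covX N D j Z u := by
  have h0 : ∀ a r, compP N (N.dX j) a r = fun _ => (0:ℝ) := by
    intro a r
    funext v
    simp [compP, NLC.dX, Pi.single_apply, mul_ite, Finset.sum_ite_eq']
  simp [covD, compT, compX, NLC.dX, h0, Pi.single_apply, ite_smul, Finset.sum_ite_eq']

lemma fromA0_eq_sum (N : NLC m n) (fx : Fin n → ℝ) (u : E m n) :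
    fromA N 0 fx 0 u = ∑ l, fx l • N.dX l u := by
  refine Prod.ext ?_ (Prod.ext ?_ ?_)
  · simp [fromA, NLC.dX, Prod.fst_sum]
  · funext s
    simp [fromA, NLC.dX, Prod.fst_sum, Prod.snd_sum, Finset.sum_apply, Pi.single_apply,
      mul_ite, Finset.sum_ite_eq']
  · funext a r
    simp only [fromA, NLC.dX, Prod.snd_sum, Finset.sum_apply, Pi.smul_apply, smul_eq_mul,
      Prod.smul_snd, Pi.zero_apply, mul_zero, Finset.sum_const_zero, zero_sub, sub_zero,
      zero_add, mul_neg]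
    rw [Finset.sum_neg_distrib, neg_inj]
    exact Finset.sum_congr rfl fun l _ => mul_comm _ _

end Aux14

section Statements

open scoped BigOperators

theorem stmt14 (m n : ℕ) (U : Set (Fin m → ℝ)) (V : Set (Fin n → ℝ))
    (hU : IsOpen U) (hV : IsOpen V) (N : NLC m n) (hN : N.SmoothOn (modelSet U V))
    (D : NLinConn m n) (hD : D.SmoothOn (modelSet U V)) :
    ∀ u ∈ modelSet U V, ∀ i j k : Fin n,
      curvR N D (N.dX k) (N.dX j) (N.dX i) u
        = ∑ l, (N.delX k (D.H2 l i j) u - N.delX j (D.H2 l i k) u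
            + (∑ r, D.H2 r i j u * D.H2 l r k u) - (∑ r, D.H2 r i k u * D.H2 l r j u)
            + ∑ f, ∑ r, D.C2 l i f r u * N.R2 f r j k u) • N.dX l u := by
  intro u hu i j k
  have hopen : IsOpen (modelSet U V) := (hU.prod (hV.prod isOpen_univ))
  -- differentiability of N2 at u
  have hdiff : ∀ a r jj, DifferentiableAt ℝ (N.N2 a r jj) u := fun a r jj =>
    ((hN.2 a r jj).contDiffAt (hopen.mem_nhds hu)).differentiableAt (by simp)
  -- derivative of the adapted field δ/δx^jj
  have hfd : ∀ jj : Fin n, HasFDerivAt (N.dX jj)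
      ((0 : E m n →L[ℝ] (Fin m → ℝ)).prod ((0 : E m n →L[ℝ] (Fin n → ℝ)).prod
        (ContinuousLinearMap.pi fun a => ContinuousLinearMap.pi fun r =>
          -(fderiv ℝ (N.N2 a r jj) u)))) u := by
    intro jj
    refine HasFDerivAt.prodMk (hasFDerivAt_const _ _)
      (HasFDerivAt.prodMk (hasFDerivAt_const _ _) ?_)
    exact hasFDerivAt_pi.2 fun a => hasFDerivAt_pi.2 fun r =>
      ((hdiff a r jj).hasFDerivAt).neg
  have hfder : ∀ (jj : Fin n) (ξ : E m n), fderiv ℝ (N.dX jj) u ξ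
      = (0, 0, fun a r => -(fderiv ℝ (N.N2 a r jj) u ξ)) := by
    intro jj ξ
    rw [(hfd jj).fderiv]
    rfl
  have hlie : lie (N.dX k) (N.dX j) u = (0, 0, fun a r => -(N.R2 a r j k u)) := by
    unfold lie
    rw [hfder j _, hfder k _]
    refine Prod.ext (by simp) (Prod.ext (by simp) ?_)
    funext a r
    simp only [Prod.snd_sub, Prod.fst_sub, Pi.sub_apply, NLC.R2, NLC.delX]
    ring
  -- the first-order covariant derivatives
  have hY : ∀ j' : Fin n, covD N D (N.dX j') (N.dX i)
      = fun v => fromA N 0 (fun l => D.H2 l i j' v) 0 v := by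
    intro j'
    funext v
    rw [covD_dX', dX_eq_fromA N i, covX_fromA0]
    congr 1
    funext l
    rw [delX_const']
    simp [Pi.single_apply, ite_mul, Finset.sum_ite_eq']
  -- the double covariant derivatives
  have hdouble : ∀ j' k' : Fin n,
      covD N D (N.dX k') (covD N D (N.dX j') (N.dX i)) u
        = fromA N 0 (fun l => N.delX k' (fun v => D.H2 l i j' v) u
            + ∑ r, D.H2 r i j' u * D.H2 l r k' u) 0 u := by
    intro j' k'
    rw [hY j', covD_dX', covX_fromA0]
  -- the bracket term
  have hcovP : ∀ (c : Fin m) (r : Fin n), covP N D c r (N.dX i) u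
      = fromA N 0 (fun l => D.C2 l i c r u) 0 u := by
    intro c r
    rw [dX_eq_fromA N i, covP_fromA0]
    congr 1
    funext l
    rw [delP_const']
    simp [Pi.single_apply, ite_mul, Finset.sum_ite_eq']
  have hbr : covD N D (lie (N.dX k) (N.dX j)) (N.dX i) u
      = ∑ c, ∑ r, (-(N.R2 c r j k u)) • covP N D c r (N.dX i) u := by
    have hT : ∀ c, compT (lie (N.dX k) (N.dX j)) c u = 0 := by
      intro c; simp [compT, hlie]
    have hX : ∀ k', compX (lie (N.dX k) (N.dX j)) k' u = 0 := by
      intro k'; simp [compX, hlie]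
    have hP : ∀ c r, compP N (lie (N.dX k) (N.dX j)) c r u = -(N.R2 c r j k u) := by
      intro c r; simp [compP, hlie]
    unfold covD
    simp [hT, hX, hP]
  -- put everything together
  unfold curvR
  rw [hdouble j k, hdouble k j, hbr]
  have hsum : ∀ fx : Fin n → ℝ, fromA N 0 fx 0 u = ∑ l, fx l • N.dX l u :=
    fun fx => fromA0_eq_sum N fx u
  rw [hsum, hsum]
  have hthird : ∑ c, ∑ r, (-(N.R2 c r j k u)) • covP N D c r (N.dX i) u
      = ∑ l, (∑ c, ∑ r, -(N.R2 c r j k u) * D.C2 l i c r u) • N.dX l u := by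
    calc ∑ c, ∑ r, (-(N.R2 c r j k u)) • covP N D c r (N.dX i) u
        = ∑ c, ∑ r, ∑ l, (-(N.R2 c r j k u) * D.C2 l i c r u) • N.dX l u := by
          refine Finset.sum_congr rfl fun c _ => Finset.sum_congr rfl fun r _ => ?_
          rw [hcovP c r, hsum, Finset.smul_sum]
          exact Finset.sum_congr rfl fun l _ => (smul_smul _ _ _)
      _ = ∑ c, ∑ l, ∑ r, (-(N.R2 c r j k u) * D.C2 l i c r u) • N.dX l u :=
          Finset.sum_congr rfl fun c _ => Finset.sum_comm
      _ = ∑ l, ∑ c, ∑ r, (-(N.R2 c r j k u) * D.C2 l i c r u) • N.dX l u :=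
          Finset.sum_comm
      _ = ∑ l, (∑ c, ∑ r, -(N.R2 c r j k u) * D.C2 l i c r u) • N.dX l u := by
          refine Finset.sum_congr rfl fun l _ => ?_
          rw [Finset.sum_smul]
          exact Finset.sum_congr rfl fun c _ => (Finset.sum_smul).symm
  rw [hthird, ← Finset.sum_sub_distrib, ← Finset.sum_sub_distrib]
  refine Finset.sum_congr rfl fun l _ => ?_
  rw [← sub_smul, ← sub_smul]
  congr 1
  have h1 : ∑ c, ∑ r, -(N.R2 c r j k u) * D.C2 l i c r u
      = -∑ f, ∑ r, D.C2 l i f r u * N.R2 f r j k u := by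
    rw [← Finset.sum_neg_distrib]
    refine Finset.sum_congr rfl fun c _ => ?_
    rw [← Finset.sum_neg_distrib]
    exact Finset.sum_congr rfl fun r _ => by ring
  rw [h1]
  ring

end Statements
end

section
/- Let D be an N-linear connection on E with curvature ℝ(X,Y)Z = D_X D_Y Z − D_Y D_X Z − D_{[X,Y]} Z. Then ℝ(δ/δt^c, δ/δt^b) ∂/∂p_i^a = −R^{(d)(i)}_{(l)(a)bc} ∂/∂p_l^d, where R^{(d)(i)}_{(l)(a)bc} = δA^{(d)(i)}_{(l)(a)b}/δt^c − δA^{(d)(i)}_{(l)(a)c}/δt^b + A^{(d)(r)}_{(l)(f)b} A^{(f)(i)}_{(r)(a)c} − A^{(d)(r)}_{(l)(f)c} A^{(f)(i)}_{(r)(a)b} + C^{(d)(i)(r)}_{(l)(a)(f)} R^{(f)}_{(r)bc}; in particular the δ/δt- and δ/δx-components of ℝ(δ/δt^c, δ/δt^b) ∂/∂p_i^a vanish. -/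
section Statements

open scoped BigOperators

namespace Stmt16Aux

open scoped BigOperators

variable {m n : ℕ}

lemma sum_single_mul (a : Fin m) (i : Fin n) (f : Fin m → Fin n → ℝ) :
    (∑ b, ∑ j, ((Pi.single a (Pi.single i (1:ℝ)) : Fin m → Fin n → ℝ) b j) * f b j) = f a i := by
  simp [Pi.single_apply, ite_apply]

lemma compT_dP (a' a : Fin m) (i : Fin n) :
    compT (dPfield m n a i) a' = fun _ : E m n => (0:ℝ) := rfl

lemma compX_dP (j : Fin n) (a : Fin m) (i : Fin n) :
    compX (dPfield m n a i) j = fun _ : E m n => (0:ℝ) := rfl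

lemma compP_dP (N : NLC m n) (a d : Fin m) (i l : Fin n) :
    compP N (dPfield m n a i) d l
      = fun _ : E m n => ((Pi.single a (Pi.single i (1:ℝ)) : Fin m → Fin n → ℝ) d l) := by
  funext u
  simp [compP, dPfield, dPnat]

lemma covT_dP (N : NLC m n) (D : NLinConn m n) (e a : Fin m) (i : Fin n) :
    covT N D e (dPfield m n a i)
      = fun u => ((0 : Fin m → ℝ), (0 : Fin n → ℝ),
          fun d l => -(D.A3 d l a i e u)) := by
  funext u
  unfold covT fromA NLC.delT
  simp only [compT_dP, compX_dP, compP_dP, fderiv_fun_const, Pi.zero_apply,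
    ContinuousLinearMap.zero_apply, zero_mul, mul_zero, Finset.sum_const_zero,
    add_zero, zero_add, zero_sub, sub_zero]
  refine Prod.ext rfl (Prod.ext rfl ?_)
  funext d l
  simp [sum_single_mul]

lemma covP_dP (N : NLC m n) (D : NLinConn m n) (f a : Fin m) (r i : Fin n) :
    covP N D f r (dPfield m n a i)
      = fun u => ((0 : Fin m → ℝ), (0 : Fin n → ℝ),
          fun d l => -(D.C3 d l a i f r u)) := by
  funext u
  unfold covP fromA delP
  simp only [compT_dP, compX_dP, compP_dP, fderiv_fun_const, Pi.zero_apply,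
    ContinuousLinearMap.zero_apply, zero_mul, mul_zero, Finset.sum_const_zero,
    add_zero, zero_add, zero_sub, sub_zero]
  refine Prod.ext rfl (Prod.ext rfl ?_)
  funext d l
  simp [sum_single_mul]


lemma compT_dT (N : NLC m n) (c a' : Fin m) :
    compT (N.dT c) a' = fun _ : E m n => ((Pi.single c (1:ℝ) : Fin m → ℝ) a') := rfl

lemma compX_dT (N : NLC m n) (c : Fin m) (j : Fin n) :
    compX (N.dT c) j = fun _ : E m n => (0:ℝ) := rfl

lemma compP_dT (N : NLC m n) (c d : Fin m) (l : Fin n) :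
    compP N (N.dT c) d l = fun _ : E m n => (0:ℝ) := by
  funext u
  simp [compP, NLC.dT, Pi.single_apply, mul_ite]

lemma covD_dT (N : NLC m n) (D : NLinConn m n) (c : Fin m) (W : E m n → E m n) :
    covD N D (N.dT c) W = covT N D c W := by
  funext u
  unfold covD
  simp [compT_dT, compX_dT, compP_dT, Pi.single_apply, ite_smul,
    Finset.sum_ite_eq']

lemma covT_V (N : NLC m n) (D : NLinConn m n) (c b a : Fin m) (i : Fin n) :
    covT N D c (fun u => ((0:Fin m → ℝ), (0:Fin n → ℝ),
        fun d l => -(D.A3 d l a i b u)))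
      = fun u => ((0:Fin m → ℝ), (0:Fin n → ℝ), fun d l =>
          -(N.delT c (D.A3 d l a i b) u)
            + ∑ f, ∑ r, D.A3 f r a i b u * D.A3 d l f r c u) := by
  funext u
  have hP : ∀ d l, compP N (fun u => ((0:Fin m → ℝ), (0:Fin n → ℝ),
      fun d l => -(D.A3 d l a i b u))) d l
      = fun u : E m n => -(D.A3 d l a i b u) := by
    intro d l; funext u; simp [compP]
  have hT : ∀ a', compT (fun u => ((0:Fin m → ℝ), (0:Fin n → ℝ),
      fun d l => -(D.A3 d l a i b u))) a' = fun _ : E m n => (0:ℝ) := fun _ => rfl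
  have hX : ∀ j, compX (fun u => ((0:Fin m → ℝ), (0:Fin n → ℝ),
      fun d l => -(D.A3 d l a i b u))) j = fun _ : E m n => (0:ℝ) := fun _ => rfl
  unfold covT fromA NLC.delT
  simp only [hP, hT, hX, fderiv_fun_const, fderiv_fun_neg, Pi.zero_apply,
    ContinuousLinearMap.zero_apply, ContinuousLinearMap.neg_apply,
    zero_mul, mul_zero, Finset.sum_const_zero, add_zero, zero_add, sub_zero]
  refine Prod.ext rfl (Prod.ext rfl ?_)
  funext d l
  simp [neg_mul, Finset.sum_neg_distrib, sub_eq_add_neg]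


lemma fderiv_dT (N : NLC m n) (u : E m n)
    (h : ∀ d l e, DifferentiableAt ℝ (N.N1 d l e) u) (e : Fin m) :
    fderiv ℝ (N.dT e) u
      = ((0 : E m n →L[ℝ] (Fin m → ℝ)).prod ((0 : E m n →L[ℝ] (Fin n → ℝ)).prod
          (ContinuousLinearMap.pi fun d => ContinuousLinearMap.pi fun l =>
            -(fderiv ℝ (N.N1 d l e) u)))) := by
  refine HasFDerivAt.fderiv ?_
  have h1 : HasFDerivAt (fun _ : E m n => (Pi.single e (1:ℝ) : Fin m → ℝ))
      (0 : E m n →L[ℝ] (Fin m → ℝ)) u := hasFDerivAt_const _ _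
  have h2 : HasFDerivAt (fun _ : E m n => (0 : Fin n → ℝ))
      (0 : E m n →L[ℝ] (Fin n → ℝ)) u := hasFDerivAt_const _ _
  have h3 : HasFDerivAt (fun u : E m n => fun d l => -(N.N1 d l e u))
      (ContinuousLinearMap.pi fun d => ContinuousLinearMap.pi fun l =>
        -(fderiv ℝ (N.N1 d l e) u)) u :=
    hasFDerivAt_pi.2 fun d => hasFDerivAt_pi.2 fun l => ((h d l e).hasFDerivAt).neg
  exact h1.prodMk (h2.prodMk h3)

lemma lie_dT (N : NLC m n) (u : E m n)
    (h : ∀ d l e, DifferentiableAt ℝ (N.N1 d l e) u) (b c : Fin m) :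
    lie (N.dT c) (N.dT b) u
      = ((0:Fin m → ℝ), (0:Fin n → ℝ), fun d l => -(N.R1 d l b c u)) := by
  unfold lie
  rw [fderiv_dT N u h, fderiv_dT N u h]
  refine Prod.ext ?_ (Prod.ext ?_ ?_)
  · simp
  · simp
  · funext d l
    simp only [Prod.snd_sub, Prod.fst_sub, Pi.sub_apply,
      ContinuousLinearMap.prod_apply, ContinuousLinearMap.pi_apply,
      ContinuousLinearMap.neg_apply, NLC.R1, NLC.delT]
    ring


lemma sum_smul_dPnat (g : Fin m → Fin n → ℝ) :
    (∑ d, ∑ l, g d l • dPnat m n d l)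
      = ((0:Fin m → ℝ), (0:Fin n → ℝ), fun d l => g d l) := by
  refine Prod.ext ?_ (Prod.ext ?_ ?_)
  · simp [dPnat, Prod.fst_sum]
  · simp [dPnat, Prod.fst_sum, Prod.snd_sum]
  · funext d l
    simp [dPnat, Prod.fst_sum, Prod.snd_sum, Finset.sum_apply,
      Pi.single_apply, ite_apply, Finset.sum_ite_eq, mul_ite]

end Stmt16Aux

theorem stmt16 (m n : ℕ) (U : Set (Fin m → ℝ)) (V : Set (Fin n → ℝ))
    (hU : IsOpen U) (hV : IsOpen V) (N : NLC m n) (hN : N.SmoothOn (modelSet U V))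
    (D : NLinConn m n) (hD : D.SmoothOn (modelSet U V)) :
    ∀ u ∈ modelSet U V, ∀ (a b c : Fin m) (i : Fin n),
      curvR N D (N.dT c) (N.dT b) (dPfield m n a i) u
        = ∑ d, ∑ l,
            (-(N.delT c (D.A3 d l a i b) u - N.delT b (D.A3 d l a i c) u
              + (∑ f, ∑ r, D.A3 d l f r b u * D.A3 f r a i c u)
              - (∑ f, ∑ r, D.A3 d l f r c u * D.A3 f r a i b u)
              + ∑ f, ∑ r, D.C3 d l a i f r u * N.R1 f r b c u))
          • dPnat m n d l := by
  intro u hu a b c i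
  have hopen : IsOpen (modelSet U V) := hU.prod (hV.prod isOpen_univ)
  have hdiff : ∀ d l e, DifferentiableAt ℝ (N.N1 d l e) u := fun d l e =>
    ((hN.1 d l e).contDiffAt (hopen.mem_nhds hu)).differentiableAt (by simp)
  have hlie := Stmt16Aux.lie_dT N u hdiff b c
  unfold curvR
  rw [Stmt16Aux.covD_dT, Stmt16Aux.covD_dT, Stmt16Aux.covD_dT, Stmt16Aux.covD_dT,
      Stmt16Aux.covT_dP, Stmt16Aux.covT_dP, Stmt16Aux.covT_V, Stmt16Aux.covT_V]
  unfold covD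
  simp only [Stmt16Aux.covP_dP, compT, compX, compP, hlie, Pi.zero_apply,
    zero_mul, mul_zero, Finset.sum_const_zero, add_zero, zero_add, zero_smul,
    zero_sub, neg_zero]
  rw [Stmt16Aux.sum_smul_dPnat]
  refine Prod.ext ?_ (Prod.ext ?_ ?_)
  · simp [dPnat, Prod.fst_sum]
  · simp [dPnat, Prod.fst_sum, Prod.snd_sum]
  · funext d l
    simp only [Prod.snd_sub, Prod.fst_sub, Pi.sub_apply, Prod.snd_sum, Prod.fst_sum,
      Finset.sum_apply, Prod.smul_snd, Prod.smul_fst, Pi.smul_apply, smul_eq_mul,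
      dPnat, Pi.single_apply, mul_ite, mul_one, mul_zero, ite_apply,
      Finset.sum_ite_eq, Finset.sum_ite_eq', Finset.mem_univ, if_true]
    have e1 : (∑ f, ∑ r, D.A3 f r a i b u * D.A3 d l f r c u)
        = ∑ f, ∑ r, D.A3 d l f r c u * D.A3 f r a i b u :=
      Finset.sum_congr rfl fun f _ => Finset.sum_congr rfl fun r _ => mul_comm _ _
    have e2 : (∑ f, ∑ r, D.A3 f r a i c u * D.A3 d l f r b u)
        = ∑ f, ∑ r, D.A3 d l f r b u * D.A3 f r a i c u :=
      Finset.sum_congr rfl fun f _ => Finset.sum_congr rfl fun r _ => mul_comm _ _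
    have e3 : (∑ f, ∑ r, -N.R1 f r b c u * -D.C3 d l a i f r u)
        = ∑ f, ∑ r, D.C3 d l a i f r u * N.R1 f r b c u :=
      Finset.sum_congr rfl fun f _ => Finset.sum_congr rfl fun r _ => by ring
    rw [e1, e2] at *
    ring_nf
    simp [neg_mul, neg_neg]
    exact Finset.sum_congr rfl fun f _ => Finset.sum_congr rfl fun r _ => mul_comm _ _

end Statements
end

section
/- Let D be an N-linear connection on E with curvature ℝ(X,Y)Z = D_X D_Y Z − D_Y D_X Z − D_{[X,Y]} Z. Then ℝ(∂/∂p_k^c, ∂/∂p_j^b) ∂/∂p_i^a = −S^{(d)(i)(j)(k)}_{(l)(a)(b)(c)} ∂/∂p_l^d, where S^{(d)(i)(j)(k)}_{(l)(a)(b)(c)} = ∂C^{(d)(i)(j)}_{(l)(a)(b)}/∂p_k^c − ∂C^{(d)(i)(k)}_{(l)(a)(c)}/∂p_j^b + C^{(d)(r)(j)}_{(l)(f)(b)} C^{(f)(i)(k)}_{(r)(a)(c)} − C^{(d)(r)(k)}_{(l)(f)(c)} C^{(f)(i)(j)}_{(r)(a)(b)}; in particular the δ/δt- and δ/δx-components of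 ℝ(∂/∂p_k^c, ∂/∂p_j^b) ∂/∂p_i^a vanish. -/
section Statements

open scoped BigOperators


section CurvHelpers
variable {m n : ℕ}

lemma covD_dPfield (N : NLC m n) (D : NLinConn m n) (c : Fin m) (k : Fin n)
    (Y : E m n → E m n) (u : E m n) :
    covD N D (dPfield m n c k) Y u = covP N D c k Y u := by
  unfold covD compT compX compP dPfield dPnat
  simp [Pi.single_apply, ite_apply, Finset.sum_ite_eq']

lemma lie_dPfield (b c : Fin m) (j k : Fin n) :
    lie (dPfield m n c k) (dPfield m n b j) = fun _ => (0 : E m n) := by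
  funext u
  unfold lie dPfield
  simp

lemma covD_zero (N : NLC m n) (D : NLinConn m n) (Z : E m n → E m n) (u : E m n) :
    covD N D (fun _ => (0 : E m n)) Z u = 0 := by
  unfold covD compT compX compP
  simp

lemma covP_vert (N : NLC m n) (D : NLinConn m n) (c : Fin m) (k : Fin n)
    (g : Fin m → Fin n → E m n → ℝ) (u : E m n) :
    covP N D c k (fun u => ((0 : Fin m → ℝ), (0 : Fin n → ℝ), fun d l => g d l u)) u =
      ((0 : Fin m → ℝ), (0 : Fin n → ℝ), fun d l => fderiv ℝ (g d l) u (dPnat m n c k)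
        - ∑ f, ∑ r, g f r u * D.C3 d l f r c k u) := by
  unfold covP fromA compT compX compP delP
  simp
  exact ⟨rfl, rfl⟩

lemma covP_dPfield (N : NLC m n) (D : NLinConn m n) (b : Fin m) (j : Fin n)
    (a : Fin m) (i : Fin n) (u : E m n) :
    covP N D b j (dPfield m n a i) u =
      ((0 : Fin m → ℝ), (0 : Fin n → ℝ), fun d l => -(D.C3 d l a i b j u)) := by
  unfold covP fromA compT compX compP delP dPfield dPnat
  simp [Pi.single_apply, ite_apply, Finset.sum_ite_eq']
  exact ⟨rfl, rfl⟩

lemma sum_smul_dPnat (s : Fin m → Fin n → ℝ) :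
    (∑ d, ∑ l, s d l • dPnat m n d l)
      = ((0 : Fin m → ℝ), (0 : Fin n → ℝ), fun d l => s d l) := by
  unfold dPnat
  refine Prod.ext ?_ (Prod.ext ?_ ?_)
  · simp [Prod.fst_sum]
  · simp [Prod.fst_sum, Prod.snd_sum]
  · funext d l
    simp [Prod.snd_sum, Finset.sum_apply, Pi.single_apply, ite_apply,
      Finset.sum_ite_eq', mul_ite]

end CurvHelpers

theorem stmt17 (m n : ℕ) (U : Set (Fin m → ℝ)) (V : Set (Fin n → ℝ))
    (hU : IsOpen U) (hV : IsOpen V) (N : NLC m n) (hN : N.SmoothOn (modelSet U V))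
    (D : NLinConn m n) (hD : D.SmoothOn (modelSet U V)) :
    ∀ u ∈ modelSet U V, ∀ (a b c : Fin m) (i j k : Fin n),
      curvR N D (dPfield m n c k) (dPfield m n b j) (dPfield m n a i) u
        = ∑ d, ∑ l,
            (-(delP c k (D.C3 d l a i b j) u - delP b j (D.C3 d l a i c k) u
              + (∑ f, ∑ r, D.C3 d l f r b j u * D.C3 f r a i c k u)
              - (∑ f, ∑ r, D.C3 d l f r c k u * D.C3 f r a i b j u)))
          • dPnat m n d l := by
  intro u hu a b c i j k
  have hYZ : covD N D (dPfield m n b j) (dPfield m n a i)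
      = fun u => ((0 : Fin m → ℝ), (0 : Fin n → ℝ), fun d l => -(D.C3 d l a i b j u)) := by
    funext v
    rw [covD_dPfield, covP_dPfield]
  have hXZ : covD N D (dPfield m n c k) (dPfield m n a i)
      = fun u => ((0 : Fin m → ℝ), (0 : Fin n → ℝ), fun d l => -(D.C3 d l a i c k u)) := by
    funext v
    rw [covD_dPfield, covP_dPfield]
  unfold curvR
  rw [lie_dPfield, covD_zero, hYZ, hXZ, covD_dPfield, covD_dPfield,
    covP_vert N D c k (fun d l u => -(D.C3 d l a i b j u)) u,
    covP_vert N D b j (fun d l u => -(D.C3 d l a i c k u)) u,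
    sum_smul_dPnat]
  refine Prod.ext ?_ (Prod.ext ?_ ?_)
  · simp
  · simp
  · funext d l
    show (fderiv ℝ (fun u => -(D.C3 d l a i b j u)) u (dPnat m n c k)
        - ∑ f, ∑ r, (-(D.C3 f r a i b j u)) * D.C3 d l f r c k u)
      - (fderiv ℝ (fun u => -(D.C3 d l a i c k u)) u (dPnat m n b j)
        - ∑ f, ∑ r, (-(D.C3 f r a i c k u)) * D.C3 d l f r b j u) - 0 = _
    rw [fderiv_fun_neg, fderiv_fun_neg]
    have hc1 : ∑ f, ∑ r, D.C3 d l f r b j u * D.C3 f r a i c k u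
        = ∑ f, ∑ r, D.C3 f r a i c k u * D.C3 d l f r b j u :=
      Finset.sum_congr rfl fun _ _ => Finset.sum_congr rfl fun _ _ => mul_comm _ _
    have hc2 : ∑ f, ∑ r, D.C3 d l f r c k u * D.C3 f r a i b j u
        = ∑ f, ∑ r, D.C3 f r a i b j u * D.C3 d l f r c k u :=
      Finset.sum_congr rfl fun _ _ => Finset.sum_congr rfl fun _ _ => mul_comm _ _
    simp only [neg_mul, Finset.sum_neg_distrib, delP, ContinuousLinearMap.neg_apply]
    rw [hc1, hc2]
    ring

end Statements
end
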